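/- arXiv:1304.4469 — 2 statements merged into one kernel-verified Lean document; each statement's English description precedes it below -/
import Mathlib

section
/- The function g0(y) := E[exp(-e^y · θ)] - E[exp(-2 e^y · θ)] is nonnegative and Lebesgue integrable on ℝ, with ∫_ℝ g0(y) dy = log 2. -/
/-!
For fixed `ω`, the substitution `x = exp y` turns `∫ g(ω, y) dy` into the Frullani integral
`∫₀^∞ (exp (-θ x) - exp (-2 θ x)) dx / x = log (2θ / θ) = log 2`. Being nonnegative with all
slice integrals equal to `log 2`, the integrand is integrable on `Ω × ℝ`, and Fubini exchanges
the expectation with `∫ dy`.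
-/

open MeasureTheory Set Filter ProbabilityTheory
open scoped ProbabilityTheory

open Real

section ExpSubstitution

variable {E : Type*} [NormedAddCommGroup E] [NormedSpace ℝ E]

theorem integrable_comp_exp_iff (g : ℝ → E) :
    Integrable (fun y => g (exp y)) ↔ IntegrableOn (fun x => x⁻¹ • g x) (Ioi 0) := by
  rw [← range_exp, ← image_univ, integrableOn_image_iff_integrableOn_abs_deriv_smul
    MeasurableSet.univ (fun y _ => (hasDerivAt_exp y).hasDerivWithinAt) exp_injective.injOn,
    integrableOn_univ]
  simp [abs_of_pos (exp_pos _), smul_smul, (exp_pos _).ne']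

theorem integral_comp_exp (g : ℝ → E) : ∫ y, g (exp y) = ∫ x in Ioi 0, x⁻¹ • g x := by
  rw [← range_exp, ← image_univ, integral_image_eq_integral_abs_deriv_smul
    MeasurableSet.univ (fun y _ => (hasDerivAt_exp y).hasDerivWithinAt) exp_injective.injOn,
    setIntegral_univ]
  simp [abs_of_pos (exp_pos _), smul_smul, (exp_pos _).ne']

end ExpSubstitution

section Frullani

theorem exp_neg_mul_sub_exp_neg_mul_le (a b x : ℝ) :
    exp (-(a * x)) - exp (-(b * x)) ≤ (b - a) * x * exp (-(a * x)) := by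
  have hsplit : exp (-(b * x)) = exp (-(a * x)) * exp (-((b - a) * x)) := by
    rw [← exp_add]; ring_nf
  have := add_one_le_exp (-((b - a) * x))
  rw [hsplit]
  nlinarith [exp_pos (-(a * x))]

variable {a b : ℝ}

theorem integrableOn_inv_mul_exp_neg_mul_sub (ha : 0 < a) (hab : a ≤ b) :
    IntegrableOn (fun x => x⁻¹ * (exp (-(a * x)) - exp (-(b * x)))) (Ioi 0) := by
  refine Integrable.mono' ((exp_neg_integrableOn_Ioi 0 ha).const_mul (b - a))
    (by fun_prop) ?_
  filter_upwards [ae_restrict_mem measurableSet_Ioi] with x (hx : 0 < x)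
  have hdiff : 0 ≤ exp (-(a * x)) - exp (-(b * x)) := by
    rw [sub_nonneg, exp_le_exp]; nlinarith
  rw [norm_of_nonneg (by positivity), inv_mul_le_iff₀ hx, neg_mul]
  linarith [exp_neg_mul_sub_exp_neg_mul_le a b x]

theorem integrable_exp_neg_mul_exp_sub (ha : 0 < a) (hab : a ≤ b) :
    Integrable (fun y => exp (-(a * exp y)) - exp (-(b * exp y))) :=
  (integrable_comp_exp_iff fun x => exp (-(a * x)) - exp (-(b * x))).2
    (integrableOn_inv_mul_exp_neg_mul_sub ha hab)

theorem integral_exp_neg_mul_exp_sub (ha : 0 < a) (hab : a ≤ b) :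
    ∫ y, (exp (-(a * exp y)) - exp (-(b * exp y))) = log (b / a) := by
  have hf : Continuous fun x : ℝ => exp (-x) := by fun_prop
  have h := Frullani.integral_Ioi_eq (f := fun x => exp (-x)) (L := 1) (R := 0)
    (hf.locallyIntegrable.locallyIntegrableOn _) ha (ha.trans_le hab)
    (by simpa using (hf.tendsto 0).mono_left nhdsWithin_le_nhds)
    tendsto_exp_neg_atTop_nhds_zero (integrableOn_inv_mul_exp_neg_mul_sub ha hab)
  rw [integral_comp_exp fun x => exp (-(a * x)) - exp (-(b * x))]
  simpa using h

theorem integrable_exp_neg_exp_mul_sub_two_mul (ha : 0 < a) :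
    Integrable (fun y => exp (-(exp y * a)) - exp (-(2 * exp y * a))) := by
  simpa only [mul_comm (exp _) a, mul_right_comm 2 (exp _) a] using
    integrable_exp_neg_mul_exp_sub (b := 2 * a) ha (by linarith)

theorem integral_exp_neg_exp_mul_sub_two_mul (ha : 0 < a) :
    ∫ y, (exp (-(exp y * a)) - exp (-(2 * exp y * a))) = log 2 := by
  simpa only [mul_comm (exp _) a, mul_right_comm 2 (exp _) a,
    mul_div_cancel_right₀ _ ha.ne'] using
    integral_exp_neg_mul_exp_sub (b := 2 * a) ha (by linarith)

end Frullani

theorem integrable_exp_neg_mul_of_nonneg {α : Type*} [MeasurableSpace α] {μ : Measure α}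
    [IsFiniteMeasure μ] {X : α → ℝ} (hX : AEMeasurable X μ) (hX_nonneg : ∀ᵐ x ∂μ, 0 ≤ X x)
    {c : ℝ} (hc : 0 ≤ c) : Integrable (fun x => exp (-(c * X x))) μ := by
  refine Integrable.of_bound (by fun_prop) 1 ?_
  filter_upwards [hX_nonneg] with x hx
  rw [norm_of_nonneg (exp_pos _).le, exp_le_one_iff, neg_nonpos]
  exact mul_nonneg hc hx

theorem integrable_prod_of_nonneg_of_integral_eq {α β : Type*} [MeasurableSpace α]
    [MeasurableSpace β] {μ : Measure α} {ν : Measure β} [IsFiniteMeasure μ] [SFinite ν]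
    {f : α × β → ℝ} (hf : AEStronglyMeasurable f (μ.prod ν)) (hf_nonneg : ∀ p, 0 ≤ f p)
    (hf_int : ∀ x, Integrable (fun y => f (x, y)) ν) {c : ℝ}
    (hf_integral : ∀ x, ∫ y, f (x, y) ∂ν = c) :
    Integrable f (μ.prod ν) := by
  refine (integrable_prod_iff hf).2 ⟨ae_of_all _ hf_int, (integrable_const c).congr ?_⟩
  filter_upwards with x
  simp_rw [norm_of_nonneg (hf_nonneg _), hf_integral]

theorem stmt_0 {Ω : Type*} [MeasureSpace Ω] [IsProbabilityMeasure (ℙ : Measure Ω)]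
    (θ : Ω → ℝ) (hθmeas : Measurable θ) (hθ : ∀ ω, θ ω ∈ Set.Ioc (0:ℝ) 1) :
    (∀ y : ℝ, 0 ≤ (∫ ω, Real.exp (-(Real.exp y * θ ω))) -
        ∫ ω, Real.exp (-(2 * Real.exp y * θ ω))) ∧
    MeasureTheory.Integrable
      (fun y : ℝ => (∫ ω, Real.exp (-(Real.exp y * θ ω))) -
        ∫ ω, Real.exp (-(2 * Real.exp y * θ ω))) volume ∧
    (∫ y : ℝ, ((∫ ω, Real.exp (-(Real.exp y * θ ω))) -
        ∫ ω, Real.exp (-(2 * Real.exp y * θ ω)))) = Real.log 2 := by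
  have hθpos (ω : Ω) : 0 < θ ω := (hθ ω).1
  set G : Ω × ℝ → ℝ := fun p => exp (-(exp p.2 * θ p.1)) - exp (-(2 * exp p.2 * θ p.1))
  have hG_nonneg (p : Ω × ℝ) : 0 ≤ G p := by
    have := mul_pos (exp_pos p.2) (hθpos p.1)
    exact sub_nonneg.2 (exp_le_exp.2 (by linarith))
  have hG_integral (ω : Ω) : ∫ y, G (ω, y) = log 2 :=
    integral_exp_neg_exp_mul_sub_two_mul (hθpos ω)
  have hG : Integrable G ((ℙ : Measure Ω).prod volume) :=
    integrable_prod_of_nonneg_of_integral_eq (by fun_prop) hG_nonneg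
      (fun ω => integrable_exp_neg_exp_mul_sub_two_mul (hθpos ω)) hG_integral
  have hexp_int {c : ℝ} (hc : 0 ≤ c) : Integrable (fun ω => exp (-(c * θ ω))) ℙ :=
    integrable_exp_neg_mul_of_nonneg hθmeas.aemeasurable (ae_of_all _ fun ω => (hθpos ω).le) hc
  have hg0 : (fun y => (∫ ω, exp (-(exp y * θ ω))) - ∫ ω, exp (-(2 * exp y * θ ω))) =
      fun y => ∫ ω, G (ω, y) := by
    ext y
    exact (integral_sub (hexp_int (exp_pos y).le) (hexp_int (by positivity))).symm
  refine ⟨fun y => ?_, ?_, ?_⟩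
  · rw [congrFun hg0 y]
    exact integral_nonneg fun ω => hG_nonneg (ω, y)
  · exact hg0 ▸ hG.integral_prod_right
  · rw [hg0, ← integral_integral_swap (f := fun ω y => G (ω, y)) hG]
    simp [hG_integral]
end

section
/- The function y ↦ e^{-y} · (E[exp(-e^y θ)] - E[exp(-2 e^y θ)]) is nonincreasing on ℝ. -/
/-!
For `u > 0`, `(e^{-u} - e^{-2u}) / u = ∫_1^2 e^{-ua} da` is nonincreasing in `u`. With `u = e^y θ`
the integrand `e^{-y} (e^{-e^y θ} - e^{-2 e^y θ})` equals `θ · (e^{-u} - e^{-2u}) / u`, so it is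
nonincreasing in `y` for every outcome, and integrating preserves this.
-/

open MeasureTheory Set Filter ProbabilityTheory Real

theorem integral_exp_neg_mul_eq {u : ℝ} (hu : u ≠ 0) (a b : ℝ) :
    ∫ x in a..b, exp (-(u * x)) = (exp (-(u * a)) - exp (-(u * b))) / u := by
  have h := intervalIntegral.integral_comp_mul_left (a := a) (b := b) exp (c := -u)
    (neg_ne_zero.2 hu)
  simp only [neg_mul] at h
  rw [h, integral_exp, smul_eq_mul]
  field_simp
  ring

theorem antitoneOn_exp_neg_mul_sub_exp_neg_mul_div {a b : ℝ} (ha : 0 ≤ a) (hab : a ≤ b) :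
    AntitoneOn (fun u => (exp (-(u * a)) - exp (-(u * b))) / u) (Ioi 0) := by
  intro s hs t ht hst
  have hcont : ∀ c : ℝ, Continuous fun x : ℝ => exp (-(c * x)) := fun c => by fun_prop
  simp only
  rw [← integral_exp_neg_mul_eq (ne_of_gt hs), ← integral_exp_neg_mul_eq (ne_of_gt ht)]
  refine intervalIntegral.integral_mono_on hab ((hcont t).intervalIntegrable _ _)
    ((hcont s).intervalIntegrable _ _) fun x hx => exp_le_exp.2 ?_
  exact neg_le_neg (mul_le_mul_of_nonneg_right hst (ha.trans hx.1))

theorem antitone_exp_neg_mul_sub_exp_neg_two_mul {p : ℝ} (hp : 0 < p) :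
    Antitone fun y => exp (-y) * (exp (-(exp y * p)) - exp (-(2 * exp y * p))) := by
  set g := fun u => (exp (-(u * 1)) - exp (-(u * 2))) / u
  have hg : AntitoneOn g (Ioi 0) :=
    antitoneOn_exp_neg_mul_sub_exp_neg_mul_div zero_le_one one_le_two
  have hrepr : ∀ y, exp (-y) * (exp (-(exp y * p)) - exp (-(2 * exp y * p)))
      = p * g (exp y * p) := fun y => by
    simp only [g, exp_neg y]
    field_simp
  intro y z hyz
  simp only [hrepr]
  exact mul_le_mul_of_nonneg_left (hg (mul_pos (exp_pos y) hp) (mul_pos (exp_pos z) hp)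
    (mul_le_mul_of_nonneg_right (exp_le_exp.2 hyz) hp.le)) hp.le

theorem integrable_exp_neg_mul {Ω : Type*} [MeasurableSpace Ω] {μ : Measure Ω} [IsFiniteMeasure μ]
    {θ : Ω → ℝ} (hθ : Measurable θ) (hθ_nonneg : ∀ ω, 0 ≤ θ ω) {c : ℝ} (hc : 0 ≤ c) :
    Integrable (fun ω => exp (-(c * θ ω))) μ := by
  refine Integrable.of_bound (by fun_prop) 1 (Eventually.of_forall fun ω => ?_)
  rw [norm_of_nonneg (exp_pos _).le, exp_le_one_iff, neg_nonpos]
  exact mul_nonneg hc (hθ_nonneg ω)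

theorem antitone_integral {α Ω : Type*} [Preorder α] [MeasurableSpace Ω] {μ : Measure Ω}
    {F : α → Ω → ℝ} (hF : ∀ a, Integrable (F a) μ) (hanti : ∀ ω, Antitone fun a => F a ω) :
    Antitone fun a => ∫ ω, F a ω ∂μ :=
  fun _ _ hab => integral_mono (hF _) (hF _) fun ω => hanti ω hab

theorem stmt_2 {Ω : Type*} [MeasureSpace Ω] [IsProbabilityMeasure (ℙ : Measure Ω)]
    (θ : Ω → ℝ) (hθmeas : Measurable θ) (hθ : ∀ ω, θ ω ∈ Set.Ioc (0:ℝ) 1) :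
    Antitone (fun y : ℝ => Real.exp (-y) *
      ((∫ ω, Real.exp (-(Real.exp y * θ ω))) -
        ∫ ω, Real.exp (-(2 * Real.exp y * θ ω)))) := by
  have hint : ∀ c : ℝ, 0 ≤ c → Integrable (fun ω => exp (-(c * θ ω))) ℙ :=
    fun c hc => integrable_exp_neg_mul hθmeas (fun ω => (hθ ω).1.le) hc
  have hint_sub : ∀ y : ℝ,
      Integrable (fun ω => exp (-(exp y * θ ω)) - exp (-(2 * exp y * θ ω))) ℙ :=
    fun y => (hint _ (exp_pos y).le).sub (hint _ (by positivity))
  have hrepr : (fun y : ℝ => exp (-y) *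
      ((∫ ω, exp (-(exp y * θ ω))) - ∫ ω, exp (-(2 * exp y * θ ω)))) =
      fun y => ∫ ω, exp (-y) * (exp (-(exp y * θ ω)) - exp (-(2 * exp y * θ ω))) := by
    funext y
    rw [integral_const_mul, integral_sub (hint _ (exp_pos y).le) (hint _ (by positivity))]
  rw [hrepr]
  exact antitone_integral (fun y => (hint_sub y).const_mul _)
    fun ω => antitone_exp_neg_mul_sub_exp_neg_two_mul (hθ ω).1
end
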